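/- For every λ ∈ (0,1], the function ν_{1+λ,λ} : ℝ → ℝ, ν_{1+λ,λ}(r) = (1+λ)·(e^r − 1)·r + (e^{−r} + r − 1) − λ·(e^r − r − 1), is strictly convex on ℝ; equivalently, its second derivative e^r·((1+λ)r + 2 + λ) + e^{−r} is strictly positive for every r ∈ ℝ. -/

import Mathlib

/-!
`ν_{c,d}''(r) = e^r (c r + 2c - d) + e^{-r}`, which for `c = 1 + λ`, `d = λ` is
`c (r + 1) e^r + 2 cosh r`. Since `(r + 1) e^r ≥ -e^{-2}` (`1 + x ≤ e^x` at `x = -r - 2`) and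
`cosh r ≥ 1`, this is positive whenever `0 ≤ c < 2 e^2`.
-/

open Real Set

noncomputable section

def upsilon (r : ℝ) : ℝ := exp r - r - 1

-- `exp r - 1` is `Υ'(r)`, so `nu c d` is the paper's `ν_{c,d}`.
def nu (c d r : ℝ) : ℝ := c * (exp r - 1) * r + upsilon (-r) - d * upsilon r

lemma hasDerivAt_nu (c d r : ℝ) :
    HasDerivAt (nu c d) (c * (r * exp r + exp r - 1) - exp (-r) + 1 - d * (exp r - 1)) r := by
  have hΥ (s : ℝ) : HasDerivAt upsilon (exp s - 1) s :=
    ((hasDerivAt_exp s).sub (hasDerivAt_id s)).sub_const 1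
  have : HasDerivAt (nu c d)
      (c * exp r * r + c * (exp r - 1) * 1 + (exp (-r) - 1) * -1 - d * (exp r - 1)) r :=
    ((((hasDerivAt_exp r).sub_const 1).const_mul c).mul (hasDerivAt_id' r)).add
      ((hΥ (-r)).comp r (hasDerivAt_neg r)) |>.sub ((hΥ r).const_mul d)
  exact this.congr_deriv (by ring)

lemma deriv_nu (c d : ℝ) :
    deriv (nu c d) = fun r => c * (r * exp r + exp r - 1) - exp (-r) + 1 - d * (exp r - 1) :=
  funext fun r => (hasDerivAt_nu c d r).deriv

lemma iterate_deriv_two_nu (c d r : ℝ) :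
    deriv^[2] (nu c d) r = exp r * (c * r + 2 * c - d) + exp (-r) := by
  have : HasDerivAt (fun s => c * (s * exp s + exp s - 1) - exp (-s) + 1 - d * (exp s - 1))
      (c * (1 * exp r + r * exp r + exp r) - exp (-r) * -1 - d * exp r) r :=
    ((((((hasDerivAt_id' r).mul (hasDerivAt_exp r)).add (hasDerivAt_exp r)).sub_const 1).const_mul
      c).sub (hasDerivAt_neg r).exp |>.add_const 1).sub (((hasDerivAt_exp r).sub_const 1).const_mul d)
  rw [Function.iterate_succ_apply, Function.iterate_one, deriv_nu, this.deriv]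
  ring

lemma strictConvexOn_nu {c d : ℝ} (h : ∀ r, 0 < exp r * (c * r + 2 * c - d) + exp (-r)) :
    StrictConvexOn ℝ univ (nu c d) :=
  strictConvexOn_univ_of_deriv2_pos
    (continuous_iff_continuousAt.2 fun r => (hasDerivAt_nu c d r).continuousAt)
    fun r => iterate_deriv_two_nu c d r ▸ h r

lemma neg_exp_neg_two_le_add_one_mul_exp (r : ℝ) : -exp (-2) ≤ (r + 1) * exp r := by
  have h := mul_le_mul_of_nonneg_right (add_one_le_exp (-r - 2)) (exp_pos r).le
  rw [← exp_add, show -r - 2 + r = -2 by ring] at h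
  linarith

lemma add_one_mul_exp_add_two_cosh_pos {c : ℝ} (hc₀ : 0 ≤ c) (hc : c < 2 * exp 2) (r : ℝ) :
    0 < c * ((r + 1) * exp r) + 2 * cosh r := by
  have hce : c * exp (-2) < 2 := by
    rwa [exp_neg, ← div_eq_mul_inv, div_lt_iff₀ (exp_pos 2)]
  nlinarith [mul_le_mul_of_nonneg_left (neg_exp_neg_two_le_add_one_mul_exp r) hc₀, one_le_cosh r]

end

theorem stmt_19 (lam : ℝ) (h0 : 0 < lam) (h1 : lam ≤ 1) :
    StrictConvexOn ℝ Set.univ (fun r : ℝ =>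
      (1 + lam) * (Real.exp r - 1) * r + (Real.exp (-r) + r - 1) -
        lam * (Real.exp r - r - 1))
    ∧ ∀ r : ℝ, 0 < Real.exp r * ((1 + lam) * r + 2 + lam) + Real.exp (-r) := by
  have hc : 1 + lam < 2 * exp 2 := by linarith [add_one_le_exp (2 : ℝ)]
  have hpos (r : ℝ) : 0 < exp r * ((1 + lam) * r + 2 + lam) + exp (-r) := by
    convert add_one_mul_exp_add_two_cosh_pos (by linarith) hc r using 1
    rw [cosh_eq]
    ring
  have hnu : (fun r : ℝ => (1 + lam) * (exp r - 1) * r + (exp (-r) + r - 1) -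
      lam * (exp r - r - 1)) = nu (1 + lam) lam := by
    funext r
    simp only [nu, upsilon]
    ring
  refine ⟨hnu ▸ strictConvexOn_nu fun r => ?_, hpos⟩
  convert hpos r using 3
  ring
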